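/- arXiv:1001.0862 — 6 statements merged into one kernel-verified Lean document; each statement's English description precedes it below -/
import Mathlib

section
/- Let γ be a left exact radical functor on R-Mod and 𝔭 a prime ideal of R. Then γ(E_R(R/𝔭)) is equal to either E_R(R/𝔭) or 0, where E_R(R/𝔭) is the injective hull of R/𝔭. -/
/-!
If `γ(E) ≠ 0`, essentiality yields a nonzero element of `γ(E)` inside `R/𝔭`; its annihilator is
`𝔭`, so by left exactness `R/𝔭 ≅ R·y ⊆ γ(E)` is `γ`-torsion. For a left exact radical `γ` the
`γ`-torsion modules are closed under submodules, quotients and extensions, so every `R/𝔭ⁿ` is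
`γ`-torsion, by filtering with `𝔭ⁱ/𝔭ⁱ⁺¹`. Since `R/𝔭` is essential in `E` and `R` is noetherian,
every element of `E` is killed by a power of `𝔭`; its cyclic submodule is then a quotient of some
`R/𝔭ⁿ`, hence `γ`-torsion, and so `γ(E) = E`.
-/

universe u

/-- A preradical functor on `R`-Mod: a subfunctor of the identity functor, given by
a choice of submodule `γ(M) ⊆ M` for every `R`-module `M`, such that every linear map
`f : M → N` restricts to a map `γ(M) → γ(N)` (the action on morphisms being restriction). -/
structure Preradical (R : Type u) [CommRing R] where
  obj : (M : Type u) → [AddCommGroup M] → [Module R M] → Submodule R M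
  map_le : ∀ {M N : Type u} [AddCommGroup M] [Module R M] [AddCommGroup N] [Module R N]
    (f : M →ₗ[R] N), (obj M).map f ≤ obj N

variable {R : Type u} [CommRing R]

/-- A preradical functor is left exact iff it preserves kernels: for every linear map
`f : M → N`, `γ(ker f)` (viewed inside `M`) equals `γ(M) ∩ ker f`. -/
def Preradical.IsLeftExact (γ : Preradical R) : Prop :=
  ∀ {M N : Type u} [AddCommGroup M] [Module R M] [AddCommGroup N] [Module R N]
    (f : M →ₗ[R] N),
      (γ.obj ↥(LinearMap.ker f)).map (LinearMap.ker f).subtype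
        = γ.obj M ⊓ LinearMap.ker f

/-- A preradical functor `γ` is a radical functor if `γ(M/γ(M)) = 0` for every module `M`. -/
def Preradical.IsRadical (γ : Preradical R) : Prop :=
  ∀ (M : Type u) [AddCommGroup M] [Module R M], γ.obj (M ⧸ γ.obj M) = ⊥

/-- A preradical functor preserves injectivity if it sends injective modules to
injective modules. -/
def Preradical.PreservesInjectivity (γ : Preradical R) : Prop :=
  ∀ (M : Type u) [AddCommGroup M] [Module R M],
    Module.Injective R M → Module.Injective R ↥(γ.obj M)

def Submodule.IsEssential {M : Type*} [AddCommGroup M] [Module R M] (L : Submodule R M) :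
    Prop :=
  ∀ N : Submodule R M, N ≠ ⊥ → N ⊓ L ≠ ⊥

namespace Submodule.IsEssential

variable {M : Type*} [AddCommGroup M] [Module R M] {L : Submodule R M}

theorem exists_smul_mem_ne_zero (hL : L.IsEssential) {x : M} (hx : x ≠ 0) :
    ∃ r : R, r • x ∈ L ∧ r • x ≠ 0 := by
  obtain ⟨_, ⟨hy, hyL⟩, hy0⟩ := (Submodule.ne_bot_iff _).mp (hL (R ∙ x) (by simpa using hx))
  obtain ⟨r, rfl⟩ := Submodule.mem_span_singleton.mp hy
  exact ⟨r, hyL, hy0⟩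

/-- The annihilators of the `s ^ k • x` stabilise; were `s ^ k • x ≠ 0`, some nonzero multiple
`r • s ^ k • x` would lie in `L`, hence be killed by `s`, contradicting the stabilisation. -/
theorem le_radical_torsionOf [IsNoetherianRing R] (hL : L.IsEssential) {p : Ideal R}
    (hpL : p ≤ Module.annihilator R L) (x : M) : p ≤ (Ideal.torsionOf R M x).radical := by
  intro s hs
  have hmono : Monotone fun k : ℕ => Ideal.torsionOf R M (s ^ k • x) :=
    monotone_nat_of_le_succ fun k r hr => by
      rw [Ideal.mem_torsionOf_iff] at hr ⊢
      rw [pow_succ', mul_smul, smul_comm, hr, smul_zero]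
  obtain ⟨k, hk⟩ := monotone_stabilizes_iff_noetherian.mpr inferInstance ⟨_, hmono⟩
  refine ⟨k, (Ideal.mem_torsionOf_iff x _).mpr (by_contra fun hx => ?_)⟩
  obtain ⟨r, hrL, hr0⟩ := hL.exists_smul_mem_ne_zero hx
  have hr : r ∈ Ideal.torsionOf R M (s ^ (k + 1) • x) := by
    rw [Ideal.mem_torsionOf_iff, pow_succ', mul_smul, smul_comm]
    exact congrArg Subtype.val (Module.mem_annihilator.mp (hpL hs) ⟨_, hrL⟩)
  have hstab : Ideal.torsionOf R M (s ^ k • x) = Ideal.torsionOf R M (s ^ (k + 1) • x) :=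
    hk (k + 1) k.le_succ
  exact hr0 ((Ideal.mem_torsionOf_iff _ r).mp (hstab ▸ hr))

end Submodule.IsEssential

theorem Ideal.torsionOf_apply_of_injective {M N : Type*} [AddCommGroup M] [Module R M]
    [AddCommGroup N] [Module R N] {f : M →ₗ[R] N} (hf : Function.Injective f) (x : M) :
    Ideal.torsionOf R N (f x) = Ideal.torsionOf R M x := by
  ext r
  simp only [Ideal.mem_torsionOf_iff, ← map_smul, map_eq_zero_iff f hf]

theorem Ideal.torsionOf_quotient_of_ne_zero {p : Ideal R} [p.IsPrime] {a : R ⧸ p} (ha : a ≠ 0) :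
    Ideal.torsionOf R (R ⧸ p) a = p := by
  ext r
  rw [Ideal.mem_torsionOf_iff, Algebra.smul_def, Ideal.Quotient.algebraMap_eq, mul_eq_zero,
    or_iff_left ha, Ideal.Quotient.eq_zero_iff_mem]

namespace Preradical

variable (γ : Preradical R) {M N : Type u} [AddCommGroup M] [Module R M]
  [AddCommGroup N] [Module R N]

theorem obj_eq_top_of_surjective (f : M →ₗ[R] N) (hf : Function.Surjective f)
    (h : γ.obj M = ⊤) : γ.obj N = ⊤ := by
  simpa [h, LinearMap.range_eq_top.mpr hf] using γ.map_le f

theorem obj_eq_top_congr (e : M ≃ₗ[R] N) : γ.obj M = ⊤ ↔ γ.obj N = ⊤ :=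
  ⟨γ.obj_eq_top_of_surjective e e.surjective,
    γ.obj_eq_top_of_surjective e.symm e.symm.surjective⟩

theorem le_obj_of_obj_eq_top {L : Submodule R M} (h : γ.obj L = ⊤) : L ≤ γ.obj M := by
  simpa [h] using γ.map_le L.subtype

theorem obj_eq_top_of_forall_span_singleton (h : ∀ x : M, γ.obj (R ∙ x) = ⊤) :
    γ.obj M = ⊤ :=
  eq_top_iff.mpr fun x _ => γ.le_obj_of_obj_eq_top (h x) (Submodule.mem_span_singleton_self x)

theorem obj_span_singleton_eq_top {I : Ideal R} {x : M} (hI : I ≤ Ideal.torsionOf R M x)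
    (h : γ.obj (R ⧸ I) = ⊤) : γ.obj (R ∙ x) = ⊤ :=
  (γ.obj_eq_top_congr (Ideal.quotTorsionOfEquivSpanSingleton R M x)).mp <|
    γ.obj_eq_top_of_surjective (Submodule.factor hI) (Submodule.factor_surjective hI) h

theorem obj_eq_top_of_le_annihilator {I : Ideal R} (hI : I ≤ Module.annihilator R M)
    (h : γ.obj (R ⧸ I) = ⊤) : γ.obj M = ⊤ :=
  γ.obj_eq_top_of_forall_span_singleton fun x =>
    γ.obj_span_singleton_eq_top (hI.trans fun _ hr => by
      simpa [Ideal.mem_torsionOf_iff] using Module.mem_annihilator.mp hr x) h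

theorem map_subtype_obj_eq_inf (hle : γ.IsLeftExact) (L : Submodule R M) :
    (γ.obj L).map L.subtype = γ.obj M ⊓ L :=
  Submodule.ker_mkQ L ▸ hle L.mkQ

theorem obj_eq_top_of_le_obj (hle : γ.IsLeftExact) {L : Submodule R M} (hL : L ≤ γ.obj M) :
    γ.obj L = ⊤ := by
  apply Submodule.map_injective_of_injective L.injective_subtype
  rw [γ.map_subtype_obj_eq_inf hle, inf_eq_right.mpr hL, Submodule.map_top, L.range_subtype]

theorem obj_quotient_torsionOf_eq_top (hle : γ.IsLeftExact) {x : M} (hx : x ∈ γ.obj M) :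
    γ.obj (R ⧸ Ideal.torsionOf R M x) = ⊤ :=
  (γ.obj_eq_top_congr (Ideal.quotTorsionOfEquivSpanSingleton R M x)).mpr <|
    γ.obj_eq_top_of_le_obj hle ((Submodule.span_singleton_le_iff_mem x _).mpr hx)

theorem obj_eq_top_of_extension (hrad : γ.IsRadical) (L : Submodule R M) (hL : γ.obj L = ⊤)
    (hML : γ.obj (M ⧸ L) = ⊤) : γ.obj M = ⊤ := by
  have hLγ := γ.le_obj_of_obj_eq_top hL
  have htop : γ.obj (M ⧸ γ.obj M) = ⊤ :=
    γ.obj_eq_top_of_surjective (Submodule.factor hLγ) (Submodule.factor_surjective hLγ) hML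
  have : Subsingleton (Submodule R (M ⧸ γ.obj M)) :=
    subsingleton_iff_bot_eq_top.mp (hrad M ▸ htop)
  rwa [Submodule.subsingleton_iff, Submodule.Quotient.subsingleton_iff] at this

theorem obj_quotient_pow_eq_top (hrad : γ.IsRadical) {I : Ideal R}
    (hI : γ.obj (R ⧸ I) = ⊤) (n : ℕ) : γ.obj (R ⧸ I ^ n) = ⊤ := by
  induction n with
  | zero =>
    have : Subsingleton (R ⧸ I ^ 0) := by simp [Ideal.one_eq_top]
    exact Subsingleton.elim _ _
  | succ n ih =>
    -- `L = Iⁿ/Iⁿ⁺¹` is killed by `I`, and the quotient by it is `R/Iⁿ`.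
    let L : Submodule R (R ⧸ I ^ (n + 1)) := Submodule.map (I ^ (n + 1)).mkQ (I ^ n)
    have hIL : I ≤ Module.annihilator R L := fun r hr => Module.mem_annihilator.mpr <| by
      rintro ⟨_, s, hs, rfl⟩
      apply Subtype.ext
      rw [Submodule.coe_smul, ← map_smul, Submodule.mkQ_apply, ZeroMemClass.coe_zero,
        Submodule.Quotient.mk_eq_zero, pow_succ']
      exact Ideal.mul_mem_mul hr hs
    have e := (Submodule.quotientQuotientEquivQuotientSup (I ^ (n + 1)) (I ^ n)).trans
      (Submodule.quotEquivOfEq _ _ (sup_eq_right.mpr (Ideal.pow_le_pow_right n.le_succ)))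
    exact γ.obj_eq_top_of_extension hrad L (γ.obj_eq_top_of_le_annihilator hIL hI)
      ((γ.obj_eq_top_congr e).mpr ih)

end Preradical

theorem stmt9_general [IsNoetherianRing R] (γ : Preradical R)
    (hle : γ.IsLeftExact) (hrad : γ.IsRadical)
    (p : Ideal R) (hp : p.IsPrime)
    (E : Type u) [AddCommGroup E] [Module R E]
    (φ : (R ⧸ p) →ₗ[R] E) (hφ : Function.Injective φ)
    (hess : ∀ N : Submodule R E, N ≠ ⊥ → N ⊓ LinearMap.range φ ≠ ⊥) :
    γ.obj E = ⊤ ∨ γ.obj E = ⊥ := by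
  refine or_iff_not_imp_right.mpr fun hγE => ?_
  obtain ⟨_, ⟨hy, a, rfl⟩, hy0⟩ := (Submodule.ne_bot_iff _).mp (hess _ hγE)
  have ha : a ≠ 0 := by
    rintro rfl
    exact hy0 (map_zero φ)
  have hRp : γ.obj (R ⧸ p) = ⊤ := by
    have := γ.obj_quotient_torsionOf_eq_top hle hy
    rwa [Ideal.torsionOf_apply_of_injective hφ, Ideal.torsionOf_quotient_of_ne_zero ha] at this
  have hpφ : p ≤ Module.annihilator R (LinearMap.range φ) :=
    (Ideal.annihilator_quotient (I := p)).ge.trans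
      (LinearMap.annihilator_le_of_surjective _ φ.surjective_rangeRestrict)
  refine γ.obj_eq_top_of_forall_span_singleton fun x => ?_
  obtain ⟨n, hn⟩ := Ideal.exists_pow_le_of_le_radical_of_fg
    (Submodule.IsEssential.le_radical_torsionOf hess hpφ x) (IsNoetherian.noetherian p)
  exact γ.obj_span_singleton_eq_top hn (γ.obj_quotient_pow_eq_top hrad hRp n)

/-- Let `γ` be a left exact radical functor on `R`-Mod (`R` commutative noetherian) and
`𝔭` a prime ideal. If `E` is an injective hull of `R/𝔭` (an injective module containing
`R/𝔭` as an essential submodule), then `γ(E)` is either all of `E` or `0`. -/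
theorem stmt9 [IsNoetherianRing R] (γ : Preradical R)
    (hle : γ.IsLeftExact) (hrad : γ.IsRadical)
    (p : Ideal R) (hp : p.IsPrime)
    (E : Type u) [AddCommGroup E] [Module R E] (hE : Module.Injective R E)
    (φ : (R ⧸ p) →ₗ[R] E) (hφ : Function.Injective φ)
    (hess : ∀ N : Submodule R E, N ≠ ⊥ → N ⊓ LinearMap.range φ ≠ ⊥) :
    γ.obj E = ⊤ ∨ γ.obj E = ⊥ :=
  stmt9_general γ hle hrad p hp E φ hφ hess
end

section
/- Every left exact radical functor γ on R-Mod preserves injectivity: if I is an injective R-module, then γ(I) is an injective R-module. -/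
universe u

variable {R : Type u} [CommRing R]

/-! The torsion class of `γ` (modules with `γ(M) = M`) is closed under quotients, under
extensions (`γ` is radical), and `γ(N) = N ∩ γ(M)` for submodules (`γ` is left exact).
Over a noetherian ring this gives stability: if `γ(M)` is essential in a finitely generated
`M`, then `M` is torsion. Indeed, a minimal prime `p` over `Ann M` is associated, so some
`y` has annihilator `p`; a nonzero multiple `r • y` lies in `γ(M)` and still has annihilator
`p`, so `R ⧸ p` is torsion, and a prime filtration of `M` does the rest.

For injective `I`, take `C` maximal with `C ∩ γ(I) = 0`. Injectivity of `I` extends the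
inverse of `γ(I) ≅ (γ(I) + C) / C` to an endomorphism `e` of `I` that fixes `γ(I)` and each
of whose nonzero values has a nonzero multiple in `γ(I)`. Stability, applied to the cyclic
modules `R ∙ e x`, puts the image of `e` inside `γ(I)`, so `γ(I)` is a retract of `I`. -/

universe v

theorem exists_maximal_disjoint {α : Type*} [CompleteLattice α] [IsCompactlyGenerated α]
    (b : α) : ∃ a, Maximal (Disjoint · b) a := by
  refine zorn_le₀ _ fun c hc hchain => ⟨sSup c, ?_, fun _ => le_sSup⟩
  exact hchain.directedOn.disjoint_sSup_left.2 fun a ha => hc ha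

theorem Ideal.torsionOf_smul_eq_of_isPrime {A M : Type*} [CommSemiring A] [AddCommMonoid M]
    [Module A M] {x : M} (hx : (Ideal.torsionOf A M x).IsPrime) {r : A} (hr : r • x ≠ 0) :
    Ideal.torsionOf A M (r • x) = Ideal.torsionOf A M x := by
  have hr' : r ∉ Ideal.torsionOf A M x := by rwa [Ideal.mem_torsionOf_iff]
  ext s
  rw [Ideal.mem_torsionOf_iff, smul_smul, ← Ideal.mem_torsionOf_iff]
  exact ⟨fun h => (hx.mem_or_mem h).resolve_right hr', fun h => Ideal.mul_mem_right r _ h⟩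

theorem Submodule.exists_mkQ_eq_smul_of_maximal_disjoint {A M : Type*} [Ring A]
    [AddCommGroup M] [Module A M] {C G : Submodule A M} (hC : Maximal (Disjoint · G) C)
    {y : M ⧸ C} (hy : y ≠ 0) : ∃ r : A, ∃ g ∈ G, g ≠ 0 ∧ C.mkQ g = r • y := by
  obtain ⟨z, rfl⟩ := C.mkQ_surjective y
  have hz : z ∉ C := by simpa using hy
  have hlt : C < C ⊔ span A {z} :=
    left_lt_sup.2 fun h => hz (h (mem_span_singleton_self z))
  obtain ⟨g, hgsup, hgG, hg0⟩ : ∃ g ∈ C ⊔ span A {z}, g ∈ G ∧ g ≠ 0 := by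
    simpa [disjoint_def] using hC.not_prop_of_gt hlt
  obtain ⟨c, hc, w, hw, rfl⟩ := mem_sup.1 hgsup
  obtain ⟨r, rfl⟩ := mem_span_singleton.1 hw
  exact ⟨r, _, hgG, hg0, by simp [(Quotient.mk_eq_zero C).2 hc]⟩

theorem Module.Injective.of_retraction {A : Type*} [Ring A] {Q N : Type v} [AddCommGroup Q]
    [Module A Q] [AddCommGroup N] [Module A N] [Module.Injective A Q] (i : N →ₗ[A] Q)
    (ρ : Q →ₗ[A] N) (hρ : ∀ x, ρ (i x) = x) : Module.Injective A N where
  out _ _ _ _ _ _ f hf g := by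
    obtain ⟨h, hh⟩ := Module.Injective.out f hf (i ∘ₗ g)
    exact ⟨ρ ∘ₗ h, fun x => by simp [hh, hρ]⟩

theorem Submodule.exists_essential_retraction {A Q : Type*} [Ring A] [AddCommGroup Q]
    [Module A Q] [Module.Injective A Q] (G : Submodule A Q) :
    ∃ e : Q →ₗ[A] Q, (∀ g ∈ G, e g = g) ∧
      ∀ x, e x ≠ 0 → ∃ r : A, r • e x ∈ G ∧ r • e x ≠ 0 := by
  obtain ⟨C, hC⟩ := exists_maximal_disjoint G
  have hinj : Function.Injective (C.mkQ ∘ₗ G.subtype) := by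
    rw [← LinearMap.ker_eq_bot, LinearMap.ker_comp, ker_mkQ, ← disjoint_iff_comap_eq_bot]
    exact hC.prop.symm
  obtain ⟨h, hh⟩ := Module.Injective.out _ hinj G.subtype
  refine ⟨h ∘ₗ C.mkQ, fun g hg => hh ⟨g, hg⟩, fun x hx => ?_⟩
  have hx' : C.mkQ x ≠ 0 := fun h0 => hx (by simp [h0])
  obtain ⟨r, g, hg, hg0, hgx⟩ := exists_mkQ_eq_smul_of_maximal_disjoint hC hx'
  have hrx : r • (h ∘ₗ C.mkQ) x = g := by
    rw [LinearMap.comp_apply, ← map_smul, ← hgx]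
    exact hh ⟨g, hg⟩
  exact ⟨r, hrx ▸ hg, hrx ▸ hg0⟩

namespace Preradical

def IsTorsion (γ : Preradical R) (M : Type u) [AddCommGroup M] [Module R M] : Prop :=
  γ.obj M = ⊤

variable {γ : Preradical R} {M N P : Type u} [AddCommGroup M] [Module R M]
  [AddCommGroup N] [Module R N] [AddCommGroup P] [Module R P]

theorem IsTorsion.of_surjective {f : M →ₗ[R] N} (hf : Function.Surjective f)
    (hM : γ.IsTorsion M) : γ.IsTorsion N := by
  have h := γ.map_le f
  rwa [hM, Submodule.map_top, LinearMap.range_eq_top.2 hf, top_le_iff] at h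

theorem isTorsion_of_subsingleton [Subsingleton M] : γ.IsTorsion M :=
  Subsingleton.elim _ _

theorem IsLeftExact.map_obj_subtype (hle : γ.IsLeftExact) (N : Submodule R M) :
    (γ.obj N).map N.subtype = γ.obj M ⊓ N := by
  have h := hle N.mkQ
  -- `ker N.mkQ = N` holds only propositionally, and `γ.obj` depends on the carrier type.
  generalize hK : LinearMap.ker N.mkQ = K at h
  rw [Submodule.ker_mkQ] at hK
  subst hK
  exact h

theorem IsLeftExact.mem_obj_submodule_iff (hle : γ.IsLeftExact) {N : Submodule R M} {z : N} :
    z ∈ γ.obj N ↔ (z : M) ∈ γ.obj M := by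
  rw [← SetLike.mem_coe, ← N.injective_subtype.mem_set_image, ← Submodule.map_coe,
    hle.map_obj_subtype]
  simp

theorem IsLeftExact.isTorsion_submodule_iff (hle : γ.IsLeftExact) {N : Submodule R M} :
    γ.IsTorsion N ↔ N ≤ γ.obj M := by
  simp only [IsTorsion, Submodule.eq_top_iff', hle.mem_obj_submodule_iff, SetLike.le_def,
    Subtype.forall]

theorem IsLeftExact.isTorsion_quotient_torsionOf (hle : γ.IsLeftExact) {x : M}
    (hx : x ∈ γ.obj M) : γ.IsTorsion (R ⧸ Ideal.torsionOf R M x) :=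
  (hle.isTorsion_submodule_iff.2 ((Submodule.span_singleton_le_iff_mem x _).2 hx)).of_surjective
    (Ideal.quotTorsionOfEquivSpanSingleton R M x).symm.surjective

theorem IsRadical.isTorsion_of_exact (hrad : γ.IsRadical) {f : M →ₗ[R] N} {g : N →ₗ[R] P}
    (hfg : Function.Exact f g) (hg : Function.Surjective g) (hM : γ.IsTorsion M)
    (hP : γ.IsTorsion P) : γ.IsTorsion N := by
  have hrange : LinearMap.range f ≤ γ.obj N := by
    have h := γ.map_le f
    rwa [hM, Submodule.map_top] at h
  have hquot : γ.IsTorsion (N ⧸ γ.obj N) :=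
    (hP.of_surjective (hfg.linearEquivOfSurjective hg).symm.surjective).of_surjective
      (Submodule.factor_surjective hrange)
  have : Subsingleton (N ⧸ γ.obj N) := by
    rw [← Submodule.subsingleton_iff R, ← subsingleton_iff_bot_eq_top, ← hrad N, hquot]
  exact Submodule.Quotient.subsingleton_iff.1 this

theorem IsRadical.isTorsion_of_forall_isPrime [IsNoetherianRing R] (hrad : γ.IsRadical)
    [Module.Finite R M]
    (h : ∀ p : Ideal R, p.IsPrime → Module.annihilator R M ≤ p → γ.IsTorsion (R ⧸ p)) :
    γ.IsTorsion M := by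
  revert h
  induction ‹Module.Finite R M› using IsNoetherianRing.induction_on_isQuotientEquivQuotientPrime
    with
  | subsingleton N => exact fun _ => isTorsion_of_subsingleton
  | quotient N p e =>
    intro h
    refine (h p.1 p.2 ?_).of_surjective e.symm.surjective
    rw [e.annihilator_eq, Ideal.annihilator_quotient]
  | exact N₁ N₂ N₃ f g hf hg hfg h₁ h₃ =>
    intro h
    refine hrad.isTorsion_of_exact hfg hg (h₁ fun p hp hann => h p hp ?_)
      (h₃ fun p hp hann => h p hp ?_)
    · exact (f.annihilator_le_of_injective hf).trans hann
    · exact (g.annihilator_le_of_surjective hg).trans hann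

theorem IsLeftExact.isTorsion_of_essential [IsNoetherianRing R] (hle : γ.IsLeftExact)
    (hrad : γ.IsRadical) [Module.Finite R M]
    (hess : ∀ y : M, y ≠ 0 → ∃ r : R, r • y ∈ γ.obj M ∧ r • y ≠ 0) : γ.IsTorsion M := by
  refine hrad.isTorsion_of_forall_isPrime fun q _ hq => ?_
  obtain ⟨p, hp, hpq⟩ := Ideal.exists_minimalPrimes_le hq
  obtain ⟨hprime, y, rfl⟩ := isAssociatedPrime_iff.1
    (Module.associatedPrimes.minimalPrimes_annihilator_subset_associatedPrimes R M hp)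
  have htorsion : Ideal.torsionOf R M y = (⊥ : Submodule R M).colon {y} := by
    ext; simp [Submodule.mem_colon_singleton]
  rw [← htorsion] at hprime hpq
  have hy : y ≠ 0 := by
    rintro rfl
    exact hprime.ne_top (by simp)
  obtain ⟨r, hr, hr0⟩ := hess y hy
  have hp_torsion := hle.isTorsion_quotient_torsionOf hr
  rw [Ideal.torsionOf_smul_eq_of_isPrime hprime hr0] at hp_torsion
  exact hp_torsion.of_surjective (Submodule.factor_surjective hpq)

theorem IsLeftExact.mem_obj_of_essential [IsNoetherianRing R] (hle : γ.IsLeftExact)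
    (hrad : γ.IsRadical) {x : M}
    (hess : ∀ z ∈ R ∙ x, z ≠ 0 → ∃ r : R, r • z ∈ γ.obj M ∧ r • z ≠ 0) : x ∈ γ.obj M := by
  have : γ.IsTorsion (R ∙ x) := hle.isTorsion_of_essential hrad fun z hz => by
    obtain ⟨r, hr, hr0⟩ := hess z z.2 (by simpa using hz)
    refine ⟨r, hle.mem_obj_submodule_iff.2 hr, ?_⟩
    rwa [Ne, ← Submodule.coe_eq_zero, Submodule.coe_smul]
  exact hle.isTorsion_submodule_iff.1 this (Submodule.mem_span_singleton_self x)

end Preradical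

/-- Every left exact radical functor on `R`-Mod (`R` commutative noetherian) preserves
injectivity: if `I` is injective then `γ(I)` is injective. -/
theorem stmt10 [IsNoetherianRing R] (γ : Preradical R)
    (hle : γ.IsLeftExact) (hrad : γ.IsRadical)
    (I : Type u) [AddCommGroup I] [Module R I] (hI : Module.Injective R I) :
    Module.Injective R ↥(γ.obj I) := by
  obtain ⟨e, he_fix, he_ess⟩ := (γ.obj I).exists_essential_retraction
  have he_mem : ∀ x, e x ∈ γ.obj I := fun x => hle.mem_obj_of_essential hrad fun z hz hz0 => by
    obtain ⟨s, rfl⟩ := Submodule.mem_span_singleton.1 hz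
    rw [← map_smul] at hz0 ⊢
    exact he_ess _ hz0
  exact .of_retraction (γ.obj I).subtype (e.codRestrict _ he_mem)
    fun g => Subtype.ext (he_fix g g.2)
end

section
/- Let γ be a left exact preradical functor on R-Mod that preserves injectivity, and let 𝔭 be a prime ideal. Then γ(R/𝔭) is either R/𝔭 or 0, and γ(E_R(R/𝔭)) is either E_R(R/𝔭) or 0. -/
universe u

variable {R : Type u} [CommRing R]

/-! Since `γ` preserves injectivity, `γ(E)` is a direct summand of `E`. Any two nonzero submodules
of the domain `R ⧸ 𝔭` meet, hence so do any two of its essential extension `E`, and a direct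
summand of such a module is `0` or everything. Left exactness gives `γ(N) = γ(M) ∩ N` for a
submodule `N ⊆ M`, so `γ(R ⧸ 𝔭) = γ(E) ∩ R ⧸ 𝔭` follows the alternative for `γ(E)`. -/

-- Unlike the usual notion of a uniform module, `M = 0` is allowed.
def Module.IsUniform (R M : Type*) [Semiring R] [AddCommMonoid M] [Module R M] : Prop :=
  ∀ A B : Submodule R M, A ≠ ⊥ → B ≠ ⊥ → A ⊓ B ≠ ⊥

namespace Module.IsUniform

theorem quotient_of_isPrime {p : Ideal R} (hp : p.IsPrime) : Module.IsUniform R (R ⧸ p) := by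
  intro A B hA hB
  obtain ⟨a, haA, ha0⟩ := (Submodule.ne_bot_iff A).1 hA
  obtain ⟨b, hbB, hb0⟩ := (Submodule.ne_bot_iff B).1 hB
  obtain ⟨r, rfl⟩ := Ideal.Quotient.mk_surjective a
  obtain ⟨s, rfl⟩ := Ideal.Quotient.mk_surjective b
  have hba : s • Ideal.Quotient.mk p r = r • Ideal.Quotient.mk p s := by
    simp only [Algebra.smul_def, Ideal.Quotient.algebraMap_eq, ← map_mul, mul_comm]
  refine (Submodule.ne_bot_iff _).2 ⟨s • Ideal.Quotient.mk p r, ⟨A.smul_mem s haA, ?_⟩, ?_⟩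
  · rw [hba]
    exact B.smul_mem r hbB
  · rw [Algebra.smul_def, Ideal.Quotient.algebraMap_eq]
    exact mul_ne_zero hb0 ha0

variable {M N : Type*} [AddCommGroup M] [Module R M] [AddCommGroup N] [Module R N]

theorem of_essential {f : M →ₗ[R] N} (hf : Function.Injective f)
    (hess : ∀ A : Submodule R N, A ≠ ⊥ → A ⊓ LinearMap.range f ≠ ⊥)
    (hM : Module.IsUniform R M) : Module.IsUniform R N := by
  have comap_ne_bot {A : Submodule R N} (hA : A ⊓ LinearMap.range f ≠ ⊥) : A.comap f ≠ ⊥ := by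
    rwa [← (Submodule.map_injective_of_injective hf).ne_iff, Submodule.map_comap_eq, inf_comm,
      Submodule.map_bot]
  intro A B hA hB hAB
  apply hM _ _ (comap_ne_bot (hess A hA)) (comap_ne_bot (hess B hB))
  rw [← Submodule.comap_inf, hAB, Submodule.comap_bot, LinearMap.ker_eq_bot_of_injective hf]

theorem eq_bot_or_eq_top_of_injective (hM : Module.IsUniform R M) (N : Submodule R M)
    [Module.Injective R N] : N = ⊥ ∨ N = ⊤ := by
  -- `π` retracts `M` onto `N`, so `ker π` meets `N` trivially and must vanish.
  obtain ⟨π, hπ⟩ := Module.Injective.out N.subtype N.injective_subtype LinearMap.id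
  have hker : LinearMap.ker π ⊓ N = ⊥ := by
    refine eq_bot_iff.2 fun x ⟨hx, hxN⟩ ↦ ?_
    have := hπ ⟨x, hxN⟩
    simp_all
  by_contra! h
  have hπ_inj : LinearMap.ker π = ⊥ := by
    by_contra hk
    exact hM _ _ hk h.1 hker
  refine h.2 (eq_top_iff.2 fun x _ ↦ ?_)
  have : (π x : M) = x := LinearMap.ker_eq_bot.1 hπ_inj (by simpa using hπ (π x))
  exact this ▸ (π x).2

end Module.IsUniform

namespace Preradical

variable {M N : Type u} [AddCommGroup M] [Module R M] [AddCommGroup N] [Module R N]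

theorem map_obj_linearEquiv (γ : Preradical R) (e : M ≃ₗ[R] N) :
    (γ.obj M).map (e : M →ₗ[R] N) = γ.obj N := by
  refine le_antisymm (γ.map_le _) ?_
  rw [Submodule.map_equiv_eq_comap_symm]
  exact Submodule.map_le_iff_le_comap.1 (γ.map_le _)

theorem IsLeftExact.map_subtype {γ : Preradical R} (hγ : γ.IsLeftExact) (N : Submodule R M) :
    (γ.obj N).map N.subtype = γ.obj M ⊓ N := by
  have := hγ N.mkQ
  rwa [Submodule.ker_mkQ] at this

theorem IsLeftExact.map_of_injective {γ : Preradical R} (hγ : γ.IsLeftExact) {f : N →ₗ[R] M}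
    (hf : Function.Injective f) : (γ.obj N).map f = γ.obj M ⊓ LinearMap.range f := by
  rw [← hγ.map_subtype, ← γ.map_obj_linearEquiv (LinearEquiv.ofInjective f hf), ← Submodule.map_comp]
  rfl

theorem IsLeftExact.eq_top_or_eq_bot_of_injective {γ : Preradical R} (hγ : γ.IsLeftExact)
    {f : N →ₗ[R] M} (hf : Function.Injective f) (hM : γ.obj M = ⊤ ∨ γ.obj M = ⊥) :
    γ.obj N = ⊤ ∨ γ.obj N = ⊥ := by
  have hmap := hγ.map_of_injective hf
  refine hM.imp (fun h ↦ ?_) (fun h ↦ ?_) <;> apply Submodule.map_injective_of_injective hf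
  · rw [hmap, h, top_inf_eq, Submodule.map_top]
  · rw [hmap, h, bot_inf_eq, Submodule.map_bot]

end Preradical

theorem stmt11_general (γ : Preradical R)
    (hle : γ.IsLeftExact) (hpi : γ.PreservesInjectivity)
    (p : Ideal R) (hp : p.IsPrime)
    (E : Type u) [AddCommGroup E] [Module R E] (hE : Module.Injective R E)
    (φ : (R ⧸ p) →ₗ[R] E) (hφ : Function.Injective φ)
    (hess : ∀ N : Submodule R E, N ≠ ⊥ → N ⊓ LinearMap.range φ ≠ ⊥) :
    (γ.obj (R ⧸ p) = ⊤ ∨ γ.obj (R ⧸ p) = ⊥) ∧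
    (γ.obj E = ⊤ ∨ γ.obj E = ⊥) := by
  have huniform : Module.IsUniform R E :=
    (Module.IsUniform.quotient_of_isPrime hp).of_essential hφ hess
  have : Module.Injective R (γ.obj E) := hpi E hE
  have hγE : γ.obj E = ⊤ ∨ γ.obj E = ⊥ := (huniform.eq_bot_or_eq_top_of_injective _).symm
  exact ⟨hle.eq_top_or_eq_bot_of_injective hφ hγE, hγE⟩

/-- Let `γ` be a left exact preradical functor on `R`-Mod (`R` commutative noetherian)
preserving injectivity, and `𝔭` a prime ideal. Then `γ(R/𝔭)` is either `R/𝔭` or `0`,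
and for `E` an injective hull of `R/𝔭`, `γ(E)` is either `E` or `0`. -/
theorem stmt11 [IsNoetherianRing R] (γ : Preradical R)
    (hle : γ.IsLeftExact) (hpi : γ.PreservesInjectivity)
    (p : Ideal R) (hp : p.IsPrime)
    (E : Type u) [AddCommGroup E] [Module R E] (hE : Module.Injective R E)
    (φ : (R ⧸ p) →ₗ[R] E) (hφ : Function.Injective φ)
    (hess : ∀ N : Submodule R E, N ≠ ⊥ → N ⊓ LinearMap.range φ ≠ ⊥) :
    (γ.obj (R ⧸ p) = ⊤ ∨ γ.obj (R ⧸ p) = ⊥) ∧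
    (γ.obj E = ⊤ ∨ γ.obj E = ⊥) :=
  stmt11_general γ hle hpi p hp E hE φ hφ hess
end

section
/- Let γ be a left exact preradical functor on R-Mod which preserves injectivity. Then the set W_γ = { 𝔭 ∈ Spec(R) : γ(R/𝔭) = R/𝔭 } is specialization-closed, i.e., 𝔭 ∈ W_γ and 𝔭 ⊆ 𝔮 imply 𝔮 ∈ W_γ. -/
universe u

variable {R : Type u} [CommRing R]

/-- For a left exact preradical functor `γ` on `R`-Mod (`R` commutative noetherian)
preserving injectivity, the set `W_γ = { 𝔭 | γ(R/𝔭) = R/𝔭 }` is specialization-closed. -/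
theorem stmt12 [IsNoetherianRing R] (γ : Preradical R)
    (hle : γ.IsLeftExact) (hpi : γ.PreservesInjectivity)
    (p q : PrimeSpectrum R) (hpq : p.asIdeal ≤ q.asIdeal)
    (hp : γ.obj (R ⧸ p.asIdeal) = ⊤) :
    γ.obj (R ⧸ q.asIdeal) = ⊤ := by
  let f : (R ⧸ p.asIdeal) →ₗ[R] (R ⧸ q.asIdeal) :=
    Submodule.mapQ p.asIdeal q.asIdeal LinearMap.id (by simpa using hpq)
  have hf : Function.Surjective f := by
    intro x
    obtain ⟨y, rfl⟩ := Submodule.mkQ_surjective q.asIdeal x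
    exact ⟨Submodule.Quotient.mk y, rfl⟩
  have h := γ.map_le f
  rw [hp, Submodule.map_top, LinearMap.range_eq_top.mpr hf] at h
  exact top_le_iff.mp h
end

section
/- Let U be a full triangulated subcategory of a triangulated category T. Then there exists a full subcategory V of T such that (U, V) is a stable t-structure on T if and only if the inclusion functor i : U → T has a right adjoint ρ : T → U. Moreover, in this case, setting δ = i∘ρ, one has U = Im(δ) and V = U^⊥ = Ker(δ). -/
open CategoryTheory Limits Pretriangulated

universe v u

variable {C : Type u} [Category.{v} C] [HasZeroObject C] [HasShift C ℤ]
  [Preadditive C] [∀ n : ℤ, (shiftFunctor C n).Additive] [Pretriangulated C]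

namespace CategoryTheory.Triangulated

/-- A triangulated subcategory (the structure `Triangulated.Subcategory` of the older
Mathlib, restated with its old fields). -/
structure Subcategory (C : Type u) [Category.{v} C] [HasZeroObject C] [HasShift C ℤ]
    [Preadditive C] [∀ n : ℤ, (shiftFunctor C n).Additive] [Pretriangulated C] where
  P : C → Prop
  zero' : ∃ (Z : C) (_ : IsZero Z), P Z
  shift (X : C) (n : ℤ) : P X → P (X⟦n⟧)
  ext₂' (T : Triangle C) (_ : T ∈ distTriang C) : P T.obj₁ → P T.obj₃ →
    ObjectProperty.isoClosure P T.obj₂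

end CategoryTheory.Triangulated

/-- A pair `(U, V)` of full triangulated subcategories of a triangulated category is a
stable t-structure if `Hom(U, V) = 0` and every object `X` fits into a distinguished
triangle `U → X → V → U[1]` with `U ∈ U` and `V ∈ V`. -/
def IsStableTStructure (U V : Triangulated.Subcategory C) : Prop :=
  (∀ ⦃X Y : C⦄, U.P X → V.P Y → ∀ f : X ⟶ Y, f = 0) ∧
  (∀ X : C, ∃ (A B : C) (f : A ⟶ X) (g : X ⟶ B) (h : B ⟶ A⟦(1 : ℤ)⟧),
    (Triangle.mk f g h ∈ distTriang C) ∧ U.P A ∧ V.P B)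

/-!
A right adjoint `ρ` of the inclusion `ι : U → T` amounts to a map `A → X` from an object of `U`,
for each `X`, through which every map from `U` factors uniquely. For a stable t-structure the
triangle `A → X → B → A[1]` provides it, since `Hom(U, B) = Hom(U, B[-1]) = 0`. Conversely, the
cone `B` of the counit `ιρX → X` lies in `U^⊥`: a map `Z → B` with `Z ∈ U` composes to zero into
`(ιρX)[1]` because `U` is stable under shifts, so it lifts to `X`, hence to `ιρX`, and then
vanishes. Given a stable t-structure `(U, V)`, an object `X ∈ U^⊥` has its triangle with `A → X`
zero, which by unique factorisation forces `A = 0`, so `X ≅ B ∈ V`; and `X ∈ U^⊥` iff `ρX = 0`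
by adjunction.
-/

namespace CategoryTheory

section Adjunction

variable {D E : Type*} [Category D] [Category E]

lemma Functor.isLeftAdjoint_of_bijective_map_comp (F : D ⥤ E) (G : E → D)
    (ε : ∀ Y, F.obj (G Y) ⟶ Y)
    (hε : ∀ W Y, Function.Bijective fun v : W ⟶ G Y => F.map v ≫ ε Y) : F.IsLeftAdjoint := by
  let e W Y : (F.obj W ⟶ Y) ≃ (W ⟶ G Y) := (Equiv.ofBijective _ (hε W Y)).symm
  have he W' W Y (q : W' ⟶ W) (w : F.obj W ⟶ Y) : e W' Y (F.map q ≫ w) = q ≫ e W Y w := by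
    apply (Equiv.ofBijective _ (hε W' Y)).injective
    simpa [e] using congrArg (F.map q ≫ ·) (Equiv.ofBijective_apply_symm_apply _ (hε W Y) w).symm
  exact ⟨_, ⟨Adjunction.adjunctionOfEquivRight e he⟩⟩

lemma Adjunction.comp_counit_bijective {F : D ⥤ E} {G : E ⥤ D} (adj : F ⊣ G)
    [F.Full] [F.Faithful] (W : D) (Y : E) :
    Function.Bijective fun v : F.obj W ⟶ F.obj (G.obj Y) => (v ≫ adj.counit.app Y : _ ⟶ Y) := by
  rw [← Function.Bijective.of_comp_iff _
    ((Functor.FullyFaithful.ofFullyFaithful F).map_bijective W (G.obj Y))]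
  convert (adj.homEquiv W Y).symm.bijective
  funext v
  simp [Adjunction.homEquiv_counit]

lemma Adjunction.isZero_obj_iff {F : D ⥤ E} {G : E ⥤ D} (adj : F ⊣ G) [F.Full] [F.Faithful]
    [HasZeroMorphisms E] (Y : E) :
    IsZero (F.obj (G.obj Y)) ↔ ∀ W (f : F.obj W ⟶ Y), f = 0 := by
  refine ⟨fun h W f => ?_, fun h => ?_⟩
  · obtain ⟨v, rfl⟩ := (adj.comp_counit_bijective W Y).2 f
    simp [h.eq_of_tgt v 0]
  · rw [IsZero.iff_id_eq_zero]
    apply (adj.comp_counit_bijective (G.obj Y) Y).1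
    simp [h _ (adj.counit.app Y)]

end Adjunction

section Shift

variable {D : Type*} [Category D]

lemma ObjectProperty.comp_shift_map_injective {M : Type*} [AddGroup M] [HasShift D M]
    {P : ObjectProperty D} [P.IsStableUnderShift M] {A X : D} (φ : A ⟶ X)
    (hφ : ∀ Z, P Z → Function.Injective fun u : Z ⟶ A => u ≫ φ) (n : M) {Z : D} (hZ : P Z) :
    Function.Injective fun v : Z ⟶ A⟦n⟧ => v ≫ φ⟦n⟧' := by
  let adj := (shiftEquiv D n).symm.toAdjunction
  intro v₁ v₂ hv
  obtain ⟨u₁, rfl⟩ := (adj.homEquiv Z A).surjective v₁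
  obtain ⟨u₂, rfl⟩ := (adj.homEquiv Z A).surjective v₂
  refine congrArg _ (hφ _ (P.le_shift (-n) Z hZ) ((adj.homEquiv Z X).injective ?_))
  exact (adj.homEquiv_naturality_right u₁ φ).trans
    (hv.trans (adj.homEquiv_naturality_right u₂ φ).symm)

end Shift

namespace Triangulated.Subcategory

instance (U : Subcategory C) : ObjectProperty.IsStableUnderShift U.P ℤ where
  isStableUnderShiftBy n := ⟨fun X hX => U.shift X n hX⟩

def ofIsTriangulated (P : ObjectProperty C) [P.IsTriangulated] : Subcategory C where
  P := P
  zero' := let ⟨Z, hZ, hP⟩ := P.exists_prop_of_containsZero; ⟨Z, hZ, hP⟩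
  shift X n := P.le_shift n X
  ext₂' := P.ext_of_isTriangulatedClosed₂'

end Triangulated.Subcategory

namespace Pretriangulated

lemma comp_mor₁_bijective {T : Triangle C} (hT : T ∈ distTriang C) {W : C}
    (h₃ : ∀ g : W ⟶ T.obj₃, g = 0) (h₃' : ∀ g : W ⟶ T.obj₃⟦(-1 : ℤ)⟧, g = 0) :
    Function.Bijective fun v : W ⟶ T.obj₁ => v ≫ T.mor₁ := by
  refine ⟨(injective_iff_map_eq_zero (Preadditive.rightComp W T.mor₁)).2 fun v hv => ?_,
    fun u => ?_⟩
  · obtain ⟨w, rfl⟩ := Triangle.coyoneda_exact₂ _ (inv_rot_of_distTriang _ hT) v hv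
    rw [show w = 0 from h₃' w]
    exact zero_comp
  · obtain ⟨v, rfl⟩ := Triangle.coyoneda_exact₂ _ hT u (h₃ _)
    exact ⟨v, rfl⟩

lemma rightOrthogonal_obj₃ {P : ObjectProperty C} [P.IsStableUnderShift ℤ]
    {T : Triangle C} (hT : T ∈ distTriang C)
    (hbij : ∀ Z, P Z → Function.Bijective fun v : Z ⟶ T.obj₁ => v ≫ T.mor₁) :
    P.rightOrthogonal T.obj₃ := by
  intro Z f hZ
  have hf₃ : f ≫ T.mor₃ = 0 := by
    apply P.comp_shift_map_injective T.mor₁ (fun Z' hZ' => (hbij Z' hZ').1) 1 hZ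
    simp [comp_distTriang_mor_zero₃₁ _ hT]
  obtain ⟨w, rfl⟩ := Triangle.coyoneda_exact₃ _ hT f hf₃
  obtain ⟨v, rfl⟩ := (hbij Z hZ).2 w
  simp [comp_distTriang_mor_zero₁₂ _ hT]

end Pretriangulated

end CategoryTheory

namespace IsStableTStructure

variable {U V : Triangulated.Subcategory C}

lemma comp_mor₁_bijective (hUV : IsStableTStructure U V) {T : Triangle C}
    (hT : T ∈ distTriang C) (h₃ : V.P T.obj₃) {W : C} (hW : U.P W) :
    Function.Bijective fun v : W ⟶ T.obj₁ => v ≫ T.mor₁ :=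
  Pretriangulated.comp_mor₁_bijective hT (hUV.1 hW h₃) (hUV.1 hW (V.shift _ _ h₃))

lemma isLeftAdjoint (hUV : IsStableTStructure U V) : (ObjectProperty.ι U.P).IsLeftAdjoint := by
  choose A B f g h hT hA hB using hUV.2
  refine Functor.isLeftAdjoint_of_bijective_map_comp _ (fun X => ⟨A X, hA X⟩) f fun W X => ?_
  exact (hUV.comp_mor₁_bijective (hT X) (hB X) W.property).comp
    ((ObjectProperty.fullyFaithfulι U.P).map_bijective _ _)

lemma mem_iff_rightOrthogonal (hUV : IsStableTStructure U V)
    (hViso : ∀ ⦃X Y : C⦄, (X ≅ Y) → V.P X → V.P Y) (X : C) :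
    V.P X ↔ ObjectProperty.rightOrthogonal U.P X := by
  refine ⟨fun hX Z f hZ => hUV.1 hZ hX f, fun hX => ?_⟩
  obtain ⟨A, B, f, g, h, hT, hA, hB⟩ := hUV.2 X
  have hA₀ : IsZero A := by
    rw [IsZero.iff_id_eq_zero]
    apply (hUV.comp_mor₁_bijective hT hB hA).1
    change 𝟙 A ≫ f = 0 ≫ f
    rw [hX f hA, comp_zero, comp_zero]
  have : IsIso g := (Triangle.isZero₁_iff_isIso₂ _ hT).1 hA₀
  exact hViso (asIso g).symm hB

end IsStableTStructure

lemma isStableTStructure_rightOrthogonal (U : Triangulated.Subcategory C)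
    {ρ : C ⥤ ObjectProperty.FullSubcategory U.P} (adj : ObjectProperty.ι U.P ⊣ ρ) :
    IsStableTStructure U
      (Triangulated.Subcategory.ofIsTriangulated (ObjectProperty.rightOrthogonal U.P)) := by
  refine ⟨fun X Y hX hY f => hY f hX, fun X => ?_⟩
  obtain ⟨B, g, h, hT⟩ := distinguished_cocone_triangle (adj.counit.app X)
  exact ⟨_, B, _, g, h, hT, (ρ.obj X).property,
    rightOrthogonal_obj₃ hT fun Z hZ => adj.comp_counit_bijective ⟨Z, hZ⟩ X⟩

/-- Miyachi's theorem: for a full triangulated subcategory `U` of a triangulated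
category `T`, there is a full subcategory `V` with `(U, V)` a stable t-structure iff the
inclusion `i : U → T` admits a right adjoint `ρ`. Moreover, in that case, with
`δ = i ∘ ρ`, one has `U = Im(δ)` and `V = U^⊥ = Ker(δ)`. -/
theorem stmt16 (U : Triangulated.Subcategory C)
    (hUiso : ∀ ⦃X Y : C⦄, (X ≅ Y) → U.P X → U.P Y) :
    ((∃ V : Triangulated.Subcategory C, IsStableTStructure U V) ↔
      (ObjectProperty.ι U.P).IsLeftAdjoint) ∧
    (∀ (V : Triangulated.Subcategory C), IsStableTStructure U V →
      (∀ ⦃X Y : C⦄, (X ≅ Y) → V.P X → V.P Y) →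
      ∀ (ρ : C ⥤ ObjectProperty.FullSubcategory U.P) (_ : ObjectProperty.ι U.P ⊣ ρ),
        (∀ X : C, U.P X ↔
          ∃ Y : C, Nonempty ((ρ ⋙ ObjectProperty.ι U.P).obj Y ≅ X)) ∧
        (∀ X : C, V.P X ↔ ∀ (Z : C), U.P Z → ∀ f : Z ⟶ X, f = 0) ∧
        (∀ X : C, V.P X ↔ IsZero ((ρ ⋙ ObjectProperty.ι U.P).obj X))) := by
  refine ⟨⟨fun ⟨V, hUV⟩ => hUV.isLeftAdjoint, fun h => ?_⟩, fun V hUV hViso ρ adj => ?_⟩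
  · obtain ⟨ρ, ⟨adj⟩⟩ := h.exists_rightAdjoint
    exact ⟨_, isStableTStructure_rightOrthogonal U adj⟩
  have hperp X : V.P X ↔ ∀ Z, U.P Z → ∀ f : Z ⟶ X, f = 0 :=
    (hUV.mem_iff_rightOrthogonal hViso X).trans
      ⟨fun h Z hZ f => h f hZ, fun h Z f hZ => h Z hZ f⟩
  refine ⟨fun X => ⟨fun hX => ⟨X, ?_⟩, fun ⟨Y, ⟨e⟩⟩ => hUiso e (ρ.obj Y).property⟩,
    hperp, fun X => ?_⟩
  · have := adj.isIso_counit_app_of_iso (X := X) (Y := ⟨X, hX⟩) (Iso.refl X)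
    exact ⟨asIso (adj.counit.app X)⟩
  · refine (hperp X).trans (.trans ?_ (adj.isZero_obj_iff X).symm)
    exact ⟨fun h W f => h W.obj W.property f, fun h Z hZ f => h ⟨Z, hZ⟩ f⟩
end

section
/- Let I and J be ideals of R and define W(I,J) = { 𝔭 ∈ Spec(R) : Iⁿ ⊆ 𝔭 + J for some n > 0 }. Then W(I,J) is the largest specialization-closed subset W of Spec(R) satisfying W ∩ V(J) = V(I+J). -/
/-!
A prime `𝔭 ⊇ J` contains `Iⁿ` iff it contains `I`, which gives `W(I,J) ∩ V(J) = V(I+J)`.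
Conversely, if `W` is specialization-closed with `W ∩ V(J) ⊆ V(I+J)` and `𝔭 ∈ W`, then every
prime `𝔮 ⊇ 𝔭 + J` lies in `W ∩ V(J)`, hence contains `I`; so `I ⊆ √(𝔭 + J)`, and since `I` is
finitely generated some power `Iⁿ` lies in `𝔭 + J`.
-/

universe u

/-- `W(I, J) = { 𝔭 ∈ Spec R | Iⁿ ⊆ 𝔭 + J for some n > 0 }`. -/
def WIJ {R : Type u} [CommRing R] (I J : Ideal R) : Set (PrimeSpectrum R) :=
  {p | ∃ n : ℕ, 0 < n ∧ I ^ n ≤ p.asIdeal + J}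

open PrimeSpectrum

namespace WIJ

variable {R : Type u} [CommRing R] {I J : Ideal R}

theorem mem_of_le {p q : PrimeSpectrum R} (hp : p ∈ WIJ I J)
    (hpq : p.asIdeal ≤ q.asIdeal) : q ∈ WIJ I J := by
  obtain ⟨n, hn, hle⟩ := hp
  exact ⟨n, hn, hle.trans (add_le_add_left hpq J)⟩

theorem mem_iff_le_of_le {p : PrimeSpectrum R} (hJ : J ≤ p.asIdeal) :
    p ∈ WIJ I J ↔ I ≤ p.asIdeal := by
  have hpJ : p.asIdeal + J = p.asIdeal := sup_eq_left.mpr hJ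
  constructor
  · rintro ⟨n, hn, hle⟩
    exact p.2.pow_le_iff hn.ne' |>.mp (hpJ ▸ hle)
  · intro hI
    exact ⟨1, one_pos, by rwa [pow_one, hpJ]⟩

theorem inter_zeroLocus :
    WIJ I J ∩ zeroLocus (J : Set R) = zeroLocus ((I + J : Ideal R) : Set R) := by
  ext p
  simp only [Set.mem_inter_iff, mem_zeroLocus, SetLike.coe_subset_coe, Ideal.add_eq_sup,
    sup_le_iff]
  constructor
  · rintro ⟨hp, hJ⟩
    exact ⟨(mem_iff_le_of_le hJ).mp hp, hJ⟩
  · rintro ⟨hI, hJ⟩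
    exact ⟨(mem_iff_le_of_le hJ).mpr hI, hJ⟩

theorem mem_of_le_radical (hI : I.FG) {p : PrimeSpectrum R}
    (h : I ≤ (p.asIdeal + J).radical) : p ∈ WIJ I J := by
  obtain ⟨n, hn⟩ := Ideal.exists_pow_le_of_le_radical_of_fg h hI
  exact ⟨n + 1, n.succ_pos, (Ideal.pow_le_pow_right n.le_succ).trans hn⟩

theorem le_radical_of_mem {W : Set (PrimeSpectrum R)}
    (hW : ∀ p q : PrimeSpectrum R, p ∈ W → p.asIdeal ≤ q.asIdeal → q ∈ W)
    (hWJ : W ∩ zeroLocus (J : Set R) ⊆ zeroLocus ((I + J : Ideal R) : Set R))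
    {p : PrimeSpectrum R} (hp : p ∈ W) : I ≤ (p.asIdeal + J).radical := by
  rw [Ideal.radical_eq_sInf]
  refine le_sInf ?_
  rintro q ⟨hpq, hq⟩
  have hqW : (⟨q, hq⟩ : PrimeSpectrum R) ∈ W := hW p ⟨q, hq⟩ hp (le_sup_left.trans hpq)
  have hqJ : (⟨q, hq⟩ : PrimeSpectrum R) ∈ zeroLocus (J : Set R) := by
    simpa only [mem_zeroLocus, SetLike.coe_subset_coe] using le_sup_right.trans hpq
  have hqIJ := hWJ ⟨hqW, hqJ⟩
  simp only [mem_zeroLocus, SetLike.coe_subset_coe] at hqIJ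
  exact le_sup_left.trans hqIJ

end WIJ

/-- For ideals `I, J` of a commutative noetherian ring `R`, the set `W(I,J)` is the
largest specialization-closed subset `W` of `Spec R` with `W ∩ V(J) = V(I+J)`. -/
theorem stmt18 {R : Type u} [CommRing R] [IsNoetherianRing R] (I J : Ideal R) :
    (∀ p q : PrimeSpectrum R, p ∈ WIJ I J → p.asIdeal ≤ q.asIdeal → q ∈ WIJ I J) ∧
    WIJ I J ∩ PrimeSpectrum.zeroLocus (J : Set R)
      = PrimeSpectrum.zeroLocus ((I + J : Ideal R) : Set R) ∧
    ∀ W : Set (PrimeSpectrum R),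
      (∀ p q : PrimeSpectrum R, p ∈ W → p.asIdeal ≤ q.asIdeal → q ∈ W) →
      W ∩ PrimeSpectrum.zeroLocus (J : Set R)
        = PrimeSpectrum.zeroLocus ((I + J : Ideal R) : Set R) →
      W ⊆ WIJ I J :=
  ⟨fun _ _ hp hpq => WIJ.mem_of_le hp hpq, WIJ.inter_zeroLocus,
    fun _ hW hWJ _ hp =>
      WIJ.mem_of_le_radical (IsNoetherian.noetherian I) (WIJ.le_radical_of_mem hW hWJ.le hp)⟩
end
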